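/- arXiv:2209.07665 — 8 statements merged into one kernel-verified Lean document; each statement's English description precedes it below -/
import Mathlib

section
/- A bounded linear operator T on a Hilbert space with polar decomposition T = U|T| is quasinormal (i.e., U|T| = |T|U) if and only if its Aluthge transform satisfies Δ(T) = T. -/
/-! If `U` commutes with `R`, it commutes with every continuous function of `R`, in particular
with `S = √R`, so `S U S = U S S = U R`. Conversely, `S U S = U S S` says that `D = S U - U S`
kills the range of `S`; it also kills `ker S ⊆ ker R = ker U`, which for self-adjoint `S` is the
orthogonal complement of that range. Hence `D = 0`, and `U` commutes with `R = S²`. -/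

namespace ContinuousLinearMap

variable {𝕜 E : Type*} [RCLike 𝕜] [NormedAddCommGroup E] [InnerProductSpace 𝕜 E] [CompleteSpace E]

theorem eq_zero_of_mul_eq_zero_of_ker_le {D S : E →L[𝕜] E} (hS : IsSelfAdjoint S)
    (hDS : D * S = 0) (hker : LinearMap.ker (S : E →ₗ[𝕜] E) ≤ LinearMap.ker (D : E →ₗ[𝕜] E)) :
    D = 0 := by
  set K := LinearMap.ker (D : E →ₗ[𝕜] E)
  have hrange : LinearMap.range (S : E →ₗ[𝕜] E) ≤ K := by
    rintro _ ⟨x, rfl⟩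
    exact congr($hDS x)
  have hKperp : Kᗮ ≤ K := calc
    Kᗮ ≤ (LinearMap.range (S : E →ₗ[𝕜] E))ᗮ := Submodule.orthogonal_le hrange
    _ = LinearMap.ker (S : E →ₗ[𝕜] E) := hS.isSymmetric.orthogonal_range
    _ ≤ K := hker
  have hK : K = ⊤ := by
    rw [← Submodule.orthogonal_eq_bot_iff, ← le_bot_iff, ← K.inf_orthogonal_eq_bot]
    exact le_inf hKperp le_rfl
  ext x
  exact (hK ▸ Submodule.mem_top : x ∈ K)

theorem commute_of_mul_mul_eq_mul_mul {S U : E →L[𝕜] E} (hS : IsSelfAdjoint S)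
    (hker : LinearMap.ker (S : E →ₗ[𝕜] E) ≤ LinearMap.ker (U : E →ₗ[𝕜] E))
    (h : S * U * S = U * S * S) : Commute S U := by
  rw [Commute, SemiconjBy, ← sub_eq_zero]
  refine eq_zero_of_mul_eq_zero_of_ker_le hS (by rw [sub_mul, h, sub_self]) fun x hx => ?_
  have hUx : U x = 0 := hker hx
  simp_all [LinearMap.mem_ker]

end ContinuousLinearMap

open ContinuousLinearMap in
theorem quasinormal_iff_aluthge_fixed_general {H : Type*} [NormedAddCommGroup H]
    [InnerProductSpace ℂ H] [CompleteSpace H] (T U R : H →L[ℂ] H)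
    (hR : 0 ≤ R) (hT : T = U * R)
    (hker : LinearMap.ker (U : H →ₗ[ℂ] H) = LinearMap.ker (R : H →ₗ[ℂ] H)) :
    U * R = R * U ↔ CFC.sqrt R * U * CFC.sqrt R = T := by
  set S := CFC.sqrt R with hS
  have hSS : S * S = R := CFC.sqrt_mul_sqrt_self R hR
  subst hT
  constructor
  · intro h
    have hSU : Commute S U := by
      rw [hS, CFC.sqrt_eq_cfc]
      exact Commute.cfc_nnreal h.symm _
    rw [← hSS, ← mul_assoc, hSU.eq]
  · intro h
    have hkerS : LinearMap.ker (S : H →ₗ[ℂ] H) ≤ LinearMap.ker (U : H →ₗ[ℂ] H) := by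
      rw [hker, ← hSS]
      exact LinearMap.ker_le_ker_comp _ _
    rw [← hSS, ← mul_assoc] at h
    have hSU := commute_of_mul_mul_eq_mul_mul (CFC.sqrt_nonneg R).isSelfAdjoint hkerS h
    rw [← hSS]
    exact (hSU.mul_left hSU).eq.symm

open ContinuousLinearMap in
/-- `T` with polar decomposition `T = U|T|` is quasinormal (`U|T| = |T|U`) iff
its Aluthge transform satisfies `Δ(T) = T`. -/
theorem quasinormal_iff_aluthge_fixed {H : Type*} [NormedAddCommGroup H]
    [InnerProductSpace ℂ H] [CompleteSpace H] (T U R : H →L[ℂ] H)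
    (hR : 0 ≤ R) (hR2 : R * R = adjoint T * T) (hT : T = U * R)
    (hker : LinearMap.ker (U : H →ₗ[ℂ] H) = LinearMap.ker (R : H →ₗ[ℂ] H)) :
    U * R = R * U ↔ CFC.sqrt R * U * CFC.sqrt R = T :=
  quasinormal_iff_aluthge_fixed_general T U R hR hT hker
end

section
/- Let T = U|T| be the polar decomposition of a bounded linear operator on a Hilbert space and λ ∈ (0,1). If 0 belongs to the approximate point spectrum of T, then 0 belongs to the approximate point spectrum of the λ-Aluthge transform Δ_λ(T) = |T|^λ U |T|^{1-λ}. -/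
set_option synthInstance.maxHeartbeats 1000000
set_option maxHeartbeats 1000000

open scoped InnerProductSpace NNReal

/-- The approximate point spectrum of a bounded operator: `μ` such that there exist
unit vectors `x n` with `‖(T - μ) x n‖ → 0`. -/
def approxPointSpectrum {H : Type*} [NormedAddCommGroup H] [InnerProductSpace ℂ H]
    [CompleteSpace H] (T : H →L[ℂ] H) : Set ℂ :=
  {μ | ∃ x : ℕ → H, (∀ n, ‖x n‖ = 1) ∧
    Filter.Tendsto (fun n => ‖T (x n) - μ • x n‖) Filter.atTop (nhds 0)}

open ContinuousLinearMap in
/-- If `0 ∈ σ_ap(T)` then `0 ∈ σ_ap(Δ_λ(T))` for `λ ∈ (0,1)`. -/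
theorem zero_mem_approxPointSpectrum_aluthge {H : Type*} [NormedAddCommGroup H]
    [InnerProductSpace ℂ H] [CompleteSpace H] (T U R : H →L[ℂ] H) (l : ℝ)
    (hl : l ∈ Set.Ioo (0 : ℝ) 1)
    (hR : 0 ≤ R) (hR2 : R * R = adjoint T * T) (hT : T = U * R)
    (hker : LinearMap.ker (U : H →ₗ[ℂ] H) = LinearMap.ker (R : H →ₗ[ℂ] H))
    (h0 : (0 : ℂ) ∈ approxPointSpectrum T) :
    (0 : ℂ) ∈ approxPointSpectrum (CFC.rpow R l * U * CFC.rpow R (1 - l)) := by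
  classical
  obtain ⟨x, hx1, hxT⟩ := h0
  have hRsa : IsSelfAdjoint R := .of_nonneg hR
  have hRadj : adjoint R = R := hRsa
  -- ‖T y‖ = ‖R y‖
  have hnorm : ∀ y : H, ‖T y‖ = ‖R y‖ := by
    intro y
    have h1 : ⟪(adjoint T * T) y, y⟫_ℂ = ⟪T y, T y⟫_ℂ := by
      rw [ContinuousLinearMap.mul_apply, adjoint_inner_left]
    have h2 : ⟪(R * R) y, y⟫_ℂ = ⟪R y, R y⟫_ℂ := by
      conv_lhs => rw [ContinuousLinearMap.mul_apply, ← hRadj]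
      rw [adjoint_inner_left, hRadj]
    have h3 : ⟪T y, T y⟫_ℂ = ⟪R y, R y⟫_ℂ := by rw [← h1, ← h2, hR2]
    have h4 : ‖T y‖ ^ 2 = ‖R y‖ ^ 2 := by
      rw [inner_self_eq_norm_sq_to_K, inner_self_eq_norm_sq_to_K] at h3
      exact_mod_cast h3
    nlinarith [norm_nonneg (T y), norm_nonneg (R y)]
  have hxR : Filter.Tendsto (fun n => ‖R (x n)‖) Filter.atTop (nhds 0) := by
    have : (fun n => ‖R (x n)‖) = fun n => ‖T (x n) - (0 : ℂ) • x n‖ := by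
      funext n; rw [zero_smul, sub_zero, hnorm]
    rw [this]; exact hxT
  set s : ℝ := 1 - l with hs
  have hs0 : 0 < s := by simp [hs]; linarith [hl.2]
  have hs1 : s ≤ 1 := by simp [hs]; linarith [hl.1]
  set B : H →L[ℂ] H := CFC.rpow R s with hB
  have hBnn : 0 ≤ B := CFC.rpow_nonneg
  -- re ⟪B xₙ, xₙ⟫ → 0
  have hBinner : Filter.Tendsto (fun n => RCLike.re ⟪B (x n), x n⟫_ℂ)
      Filter.atTop (nhds 0) := by
    rw [Metric.tendsto_atTop]
    intro ε hε
    set c : ℝ≥0 := (ε / 2).toNNReal with hc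
    have hcpos : 0 < c := by simp [hc]; positivity
    set δ : ℝ≥0 := c ^ (s⁻¹ : ℝ) with hδ
    have hδpos : 0 < δ := NNReal.rpow_pos hcpos
    set C : ℝ≥0 := max 1 δ⁻¹ with hC
    have hEq : cfc (fun t : ℝ≥0 => c + C * t) R
        = algebraMap ℝ≥0 (H →L[ℂ] H) c + C • R := by
      rw [cfc_add R _ _, cfc_const c R, cfc_const_mul_id C R]
    have hptwise : ∀ t ∈ spectrum ℝ≥0 R, t ^ s ≤ c + C * t := by
      intro t _
      rcases le_total t δ with htδ | htδ
      · have h5 : t ^ s ≤ δ ^ s := NNReal.rpow_le_rpow htδ hs0.le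
        have h6 : δ ^ s = c := by
          rw [hδ, ← NNReal.rpow_mul, inv_mul_cancel₀ hs0.ne', NNReal.rpow_one]
        exact (h5.trans_eq h6).trans le_self_add
      · rcases le_total t 1 with ht1 | ht1
        · have h5 : t ^ s ≤ 1 := NNReal.rpow_le_one ht1 hs0.le
          have h6 : (1 : ℝ≥0) ≤ C * t := by
            calc (1 : ℝ≥0) = δ⁻¹ * δ := (inv_mul_cancel₀ hδpos.ne').symm
            _ ≤ C * t := mul_le_mul' (le_max_right 1 δ⁻¹) htδ
          exact h5.trans (h6.trans le_add_self)
        · have h5 : t ^ s ≤ t ^ (1 : ℝ) := NNReal.rpow_le_rpow_of_exponent_le ht1 hs1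
          have h6 : t ^ (1 : ℝ) = t := NNReal.rpow_one t
          have h7 : t ≤ C * t := le_mul_of_one_le_left zero_le (le_max_left 1 δ⁻¹)
          exact (h5.trans_eq h6).trans (h7.trans le_add_self)
    have hop : B ≤ algebraMap ℝ≥0 (H →L[ℂ] H) c + C • R := by
      rw [← hEq]
      exact cfc_mono hptwise
        ((NNReal.continuous_rpow_const hs0.le).continuousOn)
        ((continuous_const.add (continuous_const.mul continuous_id)).continuousOn)
    have hineq : ∀ n, RCLike.re ⟪B (x n), x n⟫_ℂ ≤ (c : ℝ) + (C : ℝ) * ‖R (x n)‖ := by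
      intro n
      have hpos : 0 ≤ RCLike.re
          ⟪((algebraMap ℝ≥0 (H →L[ℂ] H) c + C • R) - B) (x n), x n⟫_ℂ :=
        (RCLike.nonneg_iff.mp (((ContinuousLinearMap.le_def _ _).mp hop).inner_nonneg_left (x n))).1
      have happ : ((algebraMap ℝ≥0 (H →L[ℂ] H) c + C • R) - B) (x n)
          = (c : ℝ) • x n + (C : ℝ) • R (x n) - B (x n) := by
        simp [ContinuousLinearMap.sub_apply, ContinuousLinearMap.add_apply,
          ContinuousLinearMap.smul_apply, Algebra.algebraMap_eq_smul_one,
          ContinuousLinearMap.one_apply, NNReal.smul_def]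
      rw [happ, inner_sub_left, inner_add_left] at hpos
      have e1 : ⟪(c : ℝ) • x n, x n⟫_ℂ = (c : ℝ) • ⟪x n, x n⟫_ℂ := by
        rw [RCLike.real_smul_eq_coe_smul (K := ℂ)]
        exact inner_smul_real_left _ _ _
      have e2 : ⟪(C : ℝ) • R (x n), x n⟫_ℂ = (C : ℝ) • ⟪R (x n), x n⟫_ℂ := by
        rw [RCLike.real_smul_eq_coe_smul (K := ℂ)]
        exact inner_smul_real_left _ _ _
      rw [e1, e2] at hpos
      simp only [map_sub, map_add, RCLike.smul_re] at hpos
      have e3 : RCLike.re ⟪x n, x n⟫_ℂ = 1 := by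
        rw [inner_self_eq_norm_sq, hx1 n]; norm_num
      have e4 : (C : ℝ) * RCLike.re ⟪R (x n), x n⟫_ℂ ≤ (C : ℝ) * ‖R (x n)‖ := by
        have hCS : RCLike.re ⟪R (x n), x n⟫_ℂ ≤ ‖R (x n)‖ := by
          simpa [hx1 n] using re_inner_le_norm (𝕜 := ℂ) (R (x n)) (x n)
        exact mul_le_mul_of_nonneg_left hCS C.coe_nonneg
      rw [e3] at hpos
      linarith [e4, hpos]
    have hBpos : ∀ n, 0 ≤ RCLike.re ⟪B (x n), x n⟫_ℂ := fun n =>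
      (RCLike.nonneg_iff.mp (((ContinuousLinearMap.nonneg_iff_isPositive B).mp hBnn).inner_nonneg_left (x n))).1
    obtain ⟨N, hN⟩ := (Metric.tendsto_atTop.mp hxR) ((ε / 2) / ((C : ℝ) + 1))
      (by positivity)
    refine ⟨N, fun n hn => ?_⟩
    have h8 := hN n hn
    rw [Real.dist_eq, sub_zero, abs_of_nonneg (norm_nonneg _)] at h8
    rw [Real.dist_eq, sub_zero, abs_of_nonneg (hBpos n)]
    have hc' : (c : ℝ) = ε / 2 := Real.coe_toNNReal _ (by positivity)
    have hC0 : (0 : ℝ) ≤ (C : ℝ) := C.coe_nonneg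
    have h9 : (C : ℝ) * ‖R (x n)‖ ≤ (C : ℝ) * ((ε / 2) / ((C : ℝ) + 1)) :=
      mul_le_mul_of_nonneg_left h8.le hC0
    have h10 : (C : ℝ) * ((ε / 2) / ((C : ℝ) + 1)) < ε / 2 := by
      have hlt : (C : ℝ) / ((C : ℝ) + 1) < 1 := (div_lt_one (by positivity)).mpr (by linarith)
      calc (C : ℝ) * ((ε / 2) / ((C : ℝ) + 1)) = (ε / 2) * ((C : ℝ) / ((C : ℝ) + 1)) := by
            ring
      _ < (ε / 2) * 1 := by
            exact mul_lt_mul_of_pos_left hlt (by positivity)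
      _ = ε / 2 := mul_one _
    calc RCLike.re ⟪B (x n), x n⟫_ℂ ≤ (c : ℝ) + (C : ℝ) * ‖R (x n)‖ := hineq n
    _ < ε / 2 + ε / 2 := by rw [hc']; linarith
    _ = ε := by ring
  -- now conclude using the square root of B
  set S : H →L[ℂ] H := CFC.sqrt B with hSdef
  have hSnn : 0 ≤ S := CFC.sqrt_nonneg B
  have hSS : S * S = B := CFC.sqrt_mul_sqrt_self B hBnn
  have hSadj : adjoint S = S := IsSelfAdjoint.of_nonneg hSnn
  have hSx : ∀ n, ‖S (x n)‖ ^ 2 = RCLike.re ⟪B (x n), x n⟫_ℂ := by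
    intro n
    have e : ⟪B (x n), x n⟫_ℂ = ⟪S (x n), S (x n)⟫_ℂ := by
      calc ⟪B (x n), x n⟫_ℂ = ⟪(S * S) (x n), x n⟫_ℂ := by rw [hSS]
      _ = ⟪adjoint S (S (x n)), x n⟫_ℂ := by rw [hSadj]; rfl
      _ = ⟪S (x n), S (x n)⟫_ℂ := adjoint_inner_left S (x n) (S (x n))
    rw [e, inner_self_eq_norm_sq]
  have hS0 : Filter.Tendsto (fun n => ‖S (x n)‖) Filter.atTop (nhds 0) := by
    have h2 : Filter.Tendsto (fun n => ‖S (x n)‖ ^ 2) Filter.atTop (nhds 0) := by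
      simp only [hSx]; exact hBinner
    have h3 := h2.sqrt
    simpa [Real.sqrt_sq (norm_nonneg _)] using h3
  have hB0 : Filter.Tendsto (fun n => ‖B (x n)‖) Filter.atTop (nhds 0) := by
    refine squeeze_zero (fun n => norm_nonneg _) (fun n => ?_)
      (by simpa using hS0.const_mul ‖S‖)
    have : B (x n) = S (S (x n)) := by rw [← hSS]; rfl
    rw [this]
    exact S.le_opNorm _
  refine ⟨x, hx1, ?_⟩
  simp only [zero_smul, sub_zero]
  refine squeeze_zero (fun n => norm_nonneg _) (fun n => ?_)
    (by simpa using hB0.const_mul (‖CFC.rpow R l‖ * ‖U‖))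
  calc ‖(CFC.rpow R l * U * B) (x n)‖ = ‖(CFC.rpow R l) (U (B (x n)))‖ := rfl
  _ ≤ ‖CFC.rpow R l‖ * ‖U (B (x n))‖ := (CFC.rpow R l).le_opNorm _
  _ ≤ ‖CFC.rpow R l‖ * (‖U‖ * ‖B (x n)‖) :=
      mul_le_mul_of_nonneg_left (U.le_opNorm _) (norm_nonneg _)
  _ = ‖CFC.rpow R l‖ * ‖U‖ * ‖B (x n)‖ := by ring
end

section
/- Let T = U|T| be the polar decomposition of a bounded linear operator on a Hilbert space with U an isometry, and λ ∈ (0,1). If 0 belongs to the approximate point spectrum of Δ_λ(T) = |T|^λ U |T|^{1-λ}, then 0 belongs to the approximate point spectrum of T. -/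
/-!
Being bounded below is the same as having `0` outside the approximate point spectrum. If `T`
were bounded below, so would be `R = |T|`, since `U` is an isometry; a bounded-below positive
operator is invertible, hence so are all its real powers, and then
`Δ_λ(T) = R ^ λ * U * R ^ (1 - λ)` would be bounded below as well.
-/

set_option synthInstance.maxHeartbeats 1000000

open scoped NNReal

lemma AntilipschitzWith.of_isometry_comp {α β γ : Type*} [PseudoEMetricSpace α]
    [PseudoEMetricSpace β] [PseudoEMetricSpace γ] {K : ℝ≥0} {g : β → γ} {f : α → β}
    (hg : Isometry g) (h : AntilipschitzWith K (g ∘ f)) : AntilipschitzWith K f := fun x y => by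
  simpa [hg.edist_eq] using h x y

namespace ContinuousLinearMap

lemma exists_antilipschitzWith_of_isUnit {𝕜 E : Type*} [NontriviallyNormedField 𝕜]
    [NormedAddCommGroup E] [NormedSpace 𝕜 E] [CompleteSpace E] {T : E →L[𝕜] E}
    (hT : IsUnit T) : ∃ K, AntilipschitzWith K T :=
  ((bijective_iff_dense_range_and_antilipschitz T).1 (isUnit_iff_bijective.1 hT)).2

/-- The range is dense since its orthogonal complement is `ker T† = ker T`. -/
lemma _root_.IsSelfAdjoint.isUnit_of_antilipschitzWith {𝕜 E : Type*} [RCLike 𝕜]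
    [NormedAddCommGroup E] [InnerProductSpace 𝕜 E] [CompleteSpace E] {T : E →L[𝕜] E}
    (hT : IsSelfAdjoint T) {K : ℝ≥0} (hK : AntilipschitzWith K T) : IsUnit T := by
  rw [isUnit_iff_bijective, bijective_iff_dense_range_and_antilipschitz]
  refine ⟨?_, K, hK⟩
  rw [Submodule.topologicalClosure_eq_top_iff, orthogonal_range, hT.adjoint_eq,
    LinearMap.ker_eq_bot]
  exact hK.injective

end ContinuousLinearMap

theorem zero_mem_approxPointSpectrum_iff {H : Type*} [NormedAddCommGroup H]
    [InnerProductSpace ℂ H] [CompleteSpace H] (T : H →L[ℂ] H) :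
    0 ∈ approxPointSpectrum T ↔ ∀ K, ¬ AntilipschitzWith K T := by
  simp only [approxPointSpectrum, Set.mem_ofPred_eq, zero_smul, sub_zero]
  constructor
  · rintro ⟨x, hx_norm, hx_lim⟩ K hK
    have hbound : ∀ n, 1 ≤ K * ‖T (x n)‖ := fun n => hx_norm n ▸ hK.le_mul_norm (map_zero T) _
    have := ge_of_tendsto' (hx_lim.const_mul (K : ℝ)) hbound
    norm_num at this
  · intro h
    have hsmall : ∀ n : ℕ, ∃ x : H, ‖x‖ = 1 ∧ ‖T x‖ < 1 / (n + 1) := by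
      intro n
      obtain ⟨y, hy⟩ : ∃ y, ‖T y‖ < 1 / (n + 1) * ‖y‖ := by
        by_contra! hy
        obtain ⟨K, hK⟩ := antilipschitzWith_iff_exists_mul_le_norm.2 ⟨_, by positivity, hy⟩
        exact h K hK
      have hy0 : y ≠ 0 := by rintro rfl; simp at hy
      refine ⟨(‖y‖⁻¹ : ℝ) • y, ?_, ?_⟩
      · rw [norm_smul, norm_inv, norm_norm, inv_mul_cancel₀ (norm_ne_zero_iff.2 hy0)]
      · rw [ContinuousLinearMap.map_smul_of_tower, norm_smul, norm_inv, norm_norm,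
          inv_mul_lt_iff₀ (norm_pos_iff.2 hy0), mul_comm]
        exact hy
    choose x hx_norm hx_small using hsmall
    exact ⟨x, hx_norm, squeeze_zero (fun n => norm_nonneg _) (fun n => (hx_small n).le)
      tendsto_one_div_add_atTop_nhds_zero_nat⟩

open ContinuousLinearMap in
theorem zero_mem_approxPointSpectrum_of_aluthge_general {H : Type*} [NormedAddCommGroup H]
    [InnerProductSpace ℂ H] [CompleteSpace H] (T U R : H →L[ℂ] H) (l : ℝ)
    (hR : 0 ≤ R) (hT : T = U * R)
    (hU : ∀ x : H, ‖U x‖ = ‖x‖)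
    (h0 : (0 : ℂ) ∈ approxPointSpectrum (CFC.rpow R l * U * CFC.rpow R (1 - l))) :
    (0 : ℂ) ∈ approxPointSpectrum T := by
  by_contra hT0
  obtain ⟨K, hK⟩ : ∃ K, AntilipschitzWith K T := by
    simpa [zero_mem_approxPointSpectrum_iff] using hT0
  have hU_iso : Isometry U := AddMonoidHomClass.isometry_of_norm U hU
  have hR_unit : IsUnit R :=
    hR.isSelfAdjoint.isUnit_of_antilipschitzWith (hK := .of_isometry_comp hU_iso (hT ▸ hK))
  obtain ⟨K₁, hK₁⟩ := exists_antilipschitzWith_of_isUnit (hR_unit.cfcRpow l)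
  obtain ⟨K₂, hK₂⟩ := exists_antilipschitzWith_of_isUnit (hR_unit.cfcRpow (1 - l))
  exact (zero_mem_approxPointSpectrum_iff _).1 h0 _ (hK₁.comp (hU_iso.antilipschitz.comp hK₂))

open ContinuousLinearMap in
/-- If `0 ∈ σ_ap(Δ_λ(T))` then `0 ∈ σ_ap(T)`, where `T = U|T|` with `U` an isometry
and `λ ∈ (0,1)`. -/
theorem zero_mem_approxPointSpectrum_of_aluthge {H : Type*} [NormedAddCommGroup H]
    [InnerProductSpace ℂ H] [CompleteSpace H] (T U R : H →L[ℂ] H) (l : ℝ)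
    (hl : l ∈ Set.Ioo (0 : ℝ) 1)
    (hR : 0 ≤ R) (hR2 : R * R = adjoint T * T) (hT : T = U * R)
    (hU : ∀ x : H, ‖U x‖ = ‖x‖)
    (h0 : (0 : ℂ) ∈ approxPointSpectrum (CFC.rpow R l * U * CFC.rpow R (1 - l))) :
    (0 : ℂ) ∈ approxPointSpectrum T :=
  zero_mem_approxPointSpectrum_of_aluthge_general T U R l hR hT hU h0
end

section
/- For a bounded linear operator T on a Hilbert space with polar decomposition T = U|T| (U an isometry) and any λ ∈ (0,1), the approximate point spectrum of T equals that of its λ-Aluthge transform: σ_ap(T) = σ_ap(Δ_λ(T)). -/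
set_option synthInstance.maxHeartbeats 1000000

/-!
For `μ ≠ 0` the theorem is the symmetry `σ_ap(AB) \ {0} = σ_ap(BA) \ {0}` applied to
`T = (U R^(1-λ)) R^λ` and `Δ_λ(T) = R^λ (U R^(1-λ))`: if `xₙ` are unit approximate eigenvectors
of `AB`, the vectors `B xₙ` have norms bounded below and are approximate eigenvectors of `BA`.

For `μ = 0`, membership means that the operator is not bounded below (antilipschitz).
Since `‖T x‖ = ‖R x‖`, `T` is bounded below iff the self-adjoint `R` is, i.e. iff `R` is
invertible. If `R` is invertible, so are its powers, and `Δ_λ(T)` is a composition of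
bounded-below maps; conversely, if `Δ_λ(T)` is bounded below then so is its right factor
`R^(1-λ)`, which is therefore invertible, and so is `R`.
-/

open ContinuousLinearMap Filter Topology
open scoped NNReal

lemma AntilipschitzWith.of_comp_lipschitzWith {α β γ : Type*} [PseudoEMetricSpace α]
    [PseudoEMetricSpace β] [PseudoEMetricSpace γ] {f : α → β} {g : β → γ} {Kf Kg : ℝ≥0}
    (hg : LipschitzWith Kg g) (hgf : AntilipschitzWith Kf (g ∘ f)) :
    AntilipschitzWith (Kf * Kg) f := fun x y =>
  calc edist x y ≤ Kf * edist (g (f x)) (g (f y)) := hgf x y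
    _ ≤ Kf * (Kg * edist (f x) (f y)) := by gcongr; exact hg _ _
    _ = ↑(Kf * Kg) * edist (f x) (f y) := by push_cast; ring

lemma CFC.rpow_add_of_pos {A : Type*} [PartialOrder A] [Ring A] [StarRing A] [TopologicalSpace A]
    [StarOrderedRing A] [Algebra ℝ A] [ContinuousFunctionalCalculus ℝ A IsSelfAdjoint]
    [NonnegSpectrumClass ℝ A] [IsSemitopologicalRing A] [T2Space A] (a : A) {x y : ℝ}
    (hx : 0 < x) (hy : 0 < y) : a ^ (x + y) = a ^ x * a ^ y := by
  lift x to ℝ≥0 using hx.le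
  lift y to ℝ≥0 using hy.le
  norm_cast at hx hy
  rw [← NNReal.coe_add, ← CFC.nnrpow_eq_rpow (add_pos hx hy), ← CFC.nnrpow_eq_rpow hx,
    ← CFC.nnrpow_eq_rpow hy, CFC.nnrpow_add hx hy]

lemma IsSelfAdjoint.isUnit_iff_exists_antilipschitz {𝕜 E : Type*} [RCLike 𝕜]
    [NormedAddCommGroup E] [InnerProductSpace 𝕜 E] [CompleteSpace E] {A : E →L[𝕜] E}
    (hA : IsSelfAdjoint A) : IsUnit A ↔ ∃ K, AntilipschitzWith K A := by
  refine ⟨fun h => antilipschitz_of_isEmbedding A (isHomeomorph_of_isUnit h).isEmbedding,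
    fun ⟨K, hK⟩ => ?_⟩
  rw [isUnit_iff_bijective, bijective_iff_dense_range_and_antilipschitz]
  refine ⟨?_, K, hK⟩
  rw [Submodule.topologicalClosure_eq_top_iff, hA.isStarNormal.orthogonal_range,
    LinearMap.ker_eq_bot]
  exact hK.injective

section approxPointSpectrum

variable {H : Type*} [NormedAddCommGroup H] [InnerProductSpace ℂ H] [CompleteSpace H]

lemma mem_approxPointSpectrum_of_tendsto_div_norm {A : H →L[ℂ] H} {μ : ℂ} {v : ℕ → H}
    (hv : ∀ n, v n ≠ 0)
    (h : Tendsto (fun n => ‖A (v n) - μ • v n‖ / ‖v n‖) atTop (𝓝 0)) :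
    μ ∈ approxPointSpectrum A := by
  refine ⟨fun n => (‖v n‖⁻¹ : ℂ) • v n, fun n => norm_smul_inv_norm (hv n), h.congr fun n => ?_⟩
  rw [map_smul, smul_comm, ← smul_sub, norm_smul, norm_inv, Complex.norm_real, norm_norm,
    inv_mul_eq_div]

lemma zero_mem_approxPointSpectrum_iff_s6 {A : H →L[ℂ] H} :
    0 ∈ approxPointSpectrum A ↔ ¬ ∃ K, AntilipschitzWith K A := by
  rw [antilipschitzWith_iff_exists_mul_le_norm]
  constructor
  · rintro ⟨x, hx1, hx⟩ ⟨c, hc, hcA⟩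
    simp only [zero_smul, sub_zero] at hx
    obtain ⟨n, hn⟩ := (hx.eventually (gt_mem_nhds hc)).exists
    have hcn := hcA (x n)
    rw [hx1, mul_one] at hcn
    linarith
  · intro h
    push Not at h
    choose v hv using fun n : ℕ => h (1 / (n + 1)) Nat.one_div_pos_of_nat
    have hv0 : ∀ n, v n ≠ 0 := fun n h0 => by simpa [h0] using hv n
    refine mem_approxPointSpectrum_of_tendsto_div_norm hv0 ?_
    refine squeeze_zero (fun n => by positivity) (fun n => ?_)
      tendsto_one_div_add_atTop_nhds_zero_nat
    rw [zero_smul, sub_zero, div_le_iff₀ (norm_pos_iff.mpr (hv0 n))]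
    exact (hv n).le

lemma zero_mem_approxPointSpectrum_congr {A B : H →L[ℂ] H} (h : ∀ x, ‖A x‖ = ‖B x‖) :
    0 ∈ approxPointSpectrum A ↔ 0 ∈ approxPointSpectrum B := by
  simp only [approxPointSpectrum, Set.mem_ofPred_eq, zero_smul, sub_zero, h]

lemma mem_approxPointSpectrum_mul_swap {A B : H →L[ℂ] H} {μ : ℂ} (hμ : μ ≠ 0)
    (h : μ ∈ approxPointSpectrum (A * B)) : μ ∈ approxPointSpectrum (B * A) := by
  obtain ⟨x, hx1, hx⟩ := h
  set c := ‖μ‖ / (2 * (‖A‖ + 1))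
  have hc : 0 < c := by have := norm_pos_iff.mpr hμ; positivity
  -- `‖μ‖ ≤ ‖A‖ ‖B xₙ‖ + ‖(AB - μ) xₙ‖`, so `‖B xₙ‖` stays away from `0`
  have hBx : ∀ᶠ n in atTop, c ≤ ‖B (x n)‖ := by
    filter_upwards [hx.eventually (gt_mem_nhds (half_pos (norm_pos_iff.mpr hμ)))] with n hn
    have : ‖μ‖ ≤ ‖A‖ * ‖B (x n)‖ + ‖(A * B) (x n) - μ • x n‖ := calc
      ‖μ‖ = ‖μ • x n‖ := by rw [norm_smul, hx1, mul_one]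
      _ ≤ ‖(A * B) (x n)‖ + ‖(A * B) (x n) - μ • x n‖ := norm_le_norm_add_norm_sub _ _
      _ ≤ _ := by gcongr; exact le_opNorm A _
    rw [div_le_iff₀ (by positivity)]
    nlinarith [norm_nonneg A, norm_nonneg (B (x n))]
  obtain ⟨N, hN⟩ := eventually_atTop.mp hBx
  have hcN : ∀ n, c ≤ ‖B (x (n + N))‖ := fun n => hN _ (Nat.le_add_left N n)
  refine mem_approxPointSpectrum_of_tendsto_div_norm (v := fun n => B (x (n + N)))
    (fun n => norm_pos_iff.mp (hc.trans_le (hcN n))) ?_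
  have hlim := (((tendsto_add_atTop_iff_nat N).mpr hx).const_mul ‖B‖).div_const c
  rw [mul_zero, zero_div] at hlim
  refine squeeze_zero (fun n => by positivity) (fun n => ?_) hlim
  have hBA : (B * A) (B (x (n + N))) - μ • B (x (n + N))
      = B ((A * B) (x (n + N)) - μ • x (n + N)) := by simp [map_sub]
  rw [hBA]
  exact div_le_div₀ (by positivity) (le_opNorm _ _) hc (hcN n)

lemma mem_approxPointSpectrum_mul_comm {A B : H →L[ℂ] H} {μ : ℂ} (hμ : μ ≠ 0) :
    μ ∈ approxPointSpectrum (A * B) ↔ μ ∈ approxPointSpectrum (B * A) :=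
  ⟨mem_approxPointSpectrum_mul_swap hμ, mem_approxPointSpectrum_mul_swap hμ⟩

lemma exists_antilipschitz_rpow_mul_mul_rpow_iff {R U : H →L[ℂ] H} (hR : 0 ≤ R) {K : ℝ≥0}
    (hU : AntilipschitzWith K U) {s t : ℝ} (ht : t ≠ 0) :
    (∃ K, AntilipschitzWith K (R ^ s * U * R ^ t)) ↔ IsUnit R := by
  have hunit : ∀ r : ℝ, IsUnit (R ^ r) ↔ ∃ K, AntilipschitzWith K (R ^ r) :=
    fun r => (IsSelfAdjoint.of_nonneg CFC.rpow_nonneg).isUnit_iff_exists_antilipschitz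
  constructor
  · rintro ⟨K', hK'⟩
    rw [← CFC.isUnit_rpow_iff R t ht, hunit]
    exact ⟨_, hK'.of_comp_lipschitzWith (R ^ s * U).lipschitz⟩
  · intro h
    obtain ⟨Ks, hRs⟩ := (hunit s).mp (h.cfcRpow s)
    obtain ⟨Kt, hRt⟩ := (hunit t).mp (h.cfcRpow t)
    exact ⟨_, (hRs.comp hU).comp hRt⟩

end approxPointSpectrum

open ContinuousLinearMap in
theorem approxPointSpectrum_lambda_aluthge_general {H : Type*} [NormedAddCommGroup H]
    [InnerProductSpace ℂ H] [CompleteSpace H] (T U R : H →L[ℂ] H) (l : ℝ)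
    (hl : l ∈ Set.Ioo (0 : ℝ) 1)
    (hR : 0 ≤ R) (hT : T = U * R)
    (hU : ∀ x : H, ‖U x‖ = ‖x‖) :
    approxPointSpectrum T =
      approxPointSpectrum (CFC.rpow R l * U * CFC.rpow R (1 - l)) := by
  simp only [CFC.rpow_eq_pow]
  ext μ
  rcases eq_or_ne μ 0 with rfl | hμ
  · have hTR : ∀ x, ‖T x‖ = ‖R x‖ := fun x => by rw [hT, mul_apply_eq_comp, hU]
    rw [zero_mem_approxPointSpectrum_congr hTR, zero_mem_approxPointSpectrum_iff_s6,
      zero_mem_approxPointSpectrum_iff_s6,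
      ← (IsSelfAdjoint.of_nonneg hR).isUnit_iff_exists_antilipschitz,
      exists_antilipschitz_rpow_mul_mul_rpow_iff hR
        (AddMonoidHomClass.isometry_of_norm U hU).antilipschitz (sub_ne_zero.2 hl.2.ne')]
  · have hT' : T = U * R ^ (1 - l) * R ^ l := by
      rw [mul_assoc, ← CFC.rpow_add_of_pos R (sub_pos.2 hl.2) hl.1, sub_add_cancel,
        CFC.rpow_one R, hT]
    rw [hT', mem_approxPointSpectrum_mul_comm hμ, ← mul_assoc]

open ContinuousLinearMap in
/-- For `T = U|T|` with `U` an isometry and `λ ∈ (0,1)`,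
`σ_ap(T) = σ_ap(Δ_λ(T))`. -/
theorem approxPointSpectrum_lambda_aluthge {H : Type*} [NormedAddCommGroup H]
    [InnerProductSpace ℂ H] [CompleteSpace H] (T U R : H →L[ℂ] H) (l : ℝ)
    (hl : l ∈ Set.Ioo (0 : ℝ) 1)
    (hR : 0 ≤ R) (hR2 : R * R = adjoint T * T) (hT : T = U * R)
    (hU : ∀ x : H, ‖U x‖ = ‖x‖) :
    approxPointSpectrum T =
      approxPointSpectrum (CFC.rpow R l * U * CFC.rpow R (1 - l)) :=
  approxPointSpectrum_lambda_aluthge_general T U R l hl hR hT hU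
end

section
/- Let Y, Z be metric spaces and H : Z → Y a Lipschitz homeomorphism with Lipschitz inverse. If P : Z → Z is a homeomorphism with the bounded shadowing property, then H ∘ P ∘ H^{-1} : Y → Y also has the bounded shadowing property. -/
set_option synthInstance.maxHeartbeats 1000000

/-- A homeomorphism `g` of a metric space has the bounded shadowing property if for every
`ε > 0` there is `δ > 0` such that every bounded `δ`-pseudo orbit `(x n)_{n ∈ ℤ}` is
`ε`-shadowed by a true orbit of `g`. -/
def BoundedShadowing {Z : Type*} [MetricSpace Z] (g : Z ≃ₜ Z) : Prop :=
  ∀ ε > (0 : ℝ), ∃ δ > (0 : ℝ), ∀ x : ℤ → Z,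
    (∀ n : ℤ, dist (g (x n)) (x (n + 1)) ≤ δ) →
    Bornology.IsBounded (Set.range x) →
    ∃ y : Z, ∀ n : ℤ, dist ((g.toEquiv ^ n) y) (x n) ≤ ε

theorem Homeomorph.toEquiv_conj_zpow_apply {Z Y : Type*} [TopologicalSpace Z]
    [TopologicalSpace Y] (e : Z ≃ₜ Y) (P : Z ≃ₜ Z) (n : ℤ) (y : Y) :
    (((e.symm.trans P).trans e).toEquiv ^ n) y = e ((P.toEquiv ^ n) (e.symm y)) :=
  congrArg (· y) (map_zpow e.toEquiv.permCongrHom P.toEquiv n).symm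

theorem BoundedShadowing.conj_of_uniformContinuous {Z Y : Type*} [MetricSpace Z]
    [MetricSpace Y] {P : Z ≃ₜ Z} (hP : BoundedShadowing P) (e : Z ≃ₜ Y)
    (he : UniformContinuous e) (he' : UniformContinuous e.symm)
    (he'_bdd : ∀ s : Set Y, Bornology.IsBounded s → Bornology.IsBounded (e.symm '' s)) :
    BoundedShadowing ((e.symm.trans P).trans e) := by
  intro ε hε
  obtain ⟨ε₀, hε₀, hε₀e⟩ := Metric.uniformContinuous_iff_le.1 he ε hε
  obtain ⟨δ₀, hδ₀, hshadow⟩ := hP ε₀ hε₀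
  obtain ⟨δ, hδ, hδe⟩ := Metric.uniformContinuous_iff_le.1 he' δ₀ hδ₀
  refine ⟨δ, hδ, fun x hx hx_bdd => ?_⟩
  have hpseudo : ∀ n, dist (P ((e.symm ∘ x) n)) ((e.symm ∘ x) (n + 1)) ≤ δ₀ := fun n => by
    simpa using hδe (hx n)
  obtain ⟨z, hz⟩ := hshadow (e.symm ∘ x) hpseudo (Set.range_comp _ _ ▸ he'_bdd _ hx_bdd)
  refine ⟨e z, fun n => ?_⟩
  rw [Homeomorph.toEquiv_conj_zpow_apply, e.symm_apply_apply]
  simpa using hε₀e (hz n)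

/-- If `H : Z → Y` is a Lipschitz homeomorphism with Lipschitz inverse and `P : Z → Z`
is a homeomorphism with the bounded shadowing property, then `H ∘ P ∘ H⁻¹ : Y → Y`
also has the bounded shadowing property. -/
theorem boundedShadowing_conj {Z Y : Type*} [MetricSpace Z] [MetricSpace Y]
    (Hm : Z ≃ₜ Y) (K K' : NNReal) (hH : LipschitzWith K Hm)
    (hH' : LipschitzWith K' Hm.symm)
    (P : Z ≃ₜ Z) (hP : BoundedShadowing P) :
    BoundedShadowing ((Hm.symm.trans P).trans Hm) :=
  hP.conj_of_uniformContinuous Hm hH.uniformContinuous hH'.uniformContinuous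
    fun _ hs => hH'.isBounded_image hs
end

section
/- Let T be an invertible bounded linear operator on a Hilbert space with polar decomposition T = U|T|. Then T has the bounded shadowing property if and only if its Aluthge transform Δ(T) = |T|^{1/2} U |T|^{1/2} does. -/
set_option synthInstance.maxHeartbeats 1000000

/-- A bounded operator `T` has the bounded shadowing property if for every `ε > 0` there is
`δ > 0` such that every bounded `δ`-pseudo orbit `(x n)_{n ∈ ℤ}` (i.e. `‖T (x n) - x (n+1)‖ ≤ δ`
and `sup ‖x n‖ < ∞`) is `ε`-shadowed by a true orbit. -/
def BoundedShadowingOp {H : Type*} [NormedAddCommGroup H] [InnerProductSpace ℂ H]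
    [CompleteSpace H] (T : H →L[ℂ] H) : Prop :=
  ∀ ε > (0 : ℝ), ∃ δ > (0 : ℝ), ∀ x : ℤ → H,
    (∀ n : ℤ, ‖T (x n) - x (n + 1)‖ ≤ δ) →
    (∃ C : ℝ, ∀ n : ℤ, ‖x n‖ ≤ C) →
    ∃ y : ℤ → H, (∀ n : ℤ, T (y n) = y (n + 1)) ∧ ∀ n : ℤ, ‖y n - x n‖ ≤ ε

lemma isUnit_of_isUnit_sq {M : Type*} [Monoid M] {a : M} (h : IsUnit (a * a)) : IsUnit a := by
  obtain ⟨u, hu⟩ := h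
  have hb : a * (a * ↑u⁻¹) = 1 := by rw [← mul_assoc, ← hu, Units.mul_inv]
  have hc : (↑u⁻¹ * a) * a = 1 := by rw [mul_assoc, ← hu, Units.inv_mul]
  have heq : (↑u⁻¹ : M) * a = a * ↑u⁻¹ := by
    calc (↑u⁻¹ : M) * a = (↑u⁻¹ * a) * (a * (a * ↑u⁻¹)) := by rw [hb, mul_one]
    _ = ((↑u⁻¹ * a) * a) * (a * ↑u⁻¹) := by simp [mul_assoc]
    _ = a * ↑u⁻¹ := by rw [hc, one_mul]
  exact ⟨⟨a, a * ↑u⁻¹, hb, by rw [← heq]; exact hc⟩, rfl⟩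

/-- Bounded shadowing transfers along similarity. -/
lemma bsh_conj {H : Type*} [NormedAddCommGroup H] [InnerProductSpace ℂ H]
    [CompleteSpace H] (T A S Sinv : H →L[ℂ] H)
    (h1 : S * Sinv = 1) (h2 : Sinv * S = 1)
    (hST : S * T = A * S)
    (hbs : BoundedShadowingOp T) : BoundedShadowingOp A := by
  intro ε hε
  obtain ⟨δ', hδ', hmain⟩ := hbs (ε / (‖S‖ + 1)) (by positivity)
  refine ⟨δ' / (‖Sinv‖ + 1), by positivity, fun x hx hbdd => ?_⟩
  have hTS : T * Sinv = Sinv * A := by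
    calc T * Sinv = (Sinv * S) * T * Sinv := by rw [h2, one_mul]
    _ = Sinv * (S * T) * Sinv := by rw [mul_assoc Sinv S T]
    _ = Sinv * A * (S * Sinv) := by rw [hST, mul_assoc, mul_assoc, mul_assoc]
    _ = Sinv * A := by rw [h1, mul_one]
  have happ : ∀ v : H, T (Sinv v) = Sinv (A v) := fun v => by
    have := congrFun (congrArg DFunLike.coe hTS) v
    simpa using this
  obtain ⟨C, hC⟩ := hbdd
  obtain ⟨y, hy, hyx⟩ := hmain (fun n => Sinv (x n))
    (fun n => by
      rw [happ, ← map_sub]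
      calc ‖Sinv (A (x n) - x (n + 1))‖ ≤ ‖Sinv‖ * ‖A (x n) - x (n + 1)‖ :=
        Sinv.le_opNorm _
      _ ≤ (‖Sinv‖ + 1) * (δ' / (‖Sinv‖ + 1)) := by
        apply mul_le_mul (by linarith [norm_nonneg Sinv]) (hx n) (norm_nonneg _)
        positivity
      _ = δ' := by field_simp)
    ⟨‖Sinv‖ * C, fun n => (Sinv.le_opNorm _).trans
      (mul_le_mul_of_nonneg_left (hC n) (norm_nonneg _))⟩
  have happ' : ∀ v : H, A (S v) = S (T v) := fun v => by
    have := congrFun (congrArg DFunLike.coe hST) v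
    simpa using this.symm
  have hSSinv : ∀ v : H, S (Sinv v) = v := fun v => by
    have := congrFun (congrArg DFunLike.coe h1) v
    simpa using this
  refine ⟨fun n => S (y n), fun n => by rw [happ', hy], fun n => ?_⟩
  calc ‖S (y n) - x n‖ = ‖S (y n - Sinv (x n))‖ := by rw [map_sub, hSSinv]
  _ ≤ ‖S‖ * ‖y n - Sinv (x n)‖ := S.le_opNorm _
  _ ≤ (‖S‖ + 1) * (ε / (‖S‖ + 1)) := by
      apply mul_le_mul (by linarith [norm_nonneg S]) (hyx n) (norm_nonneg _)
      positivity
  _ = ε := by field_simp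

open ContinuousLinearMap in
/-- Let `T = U|T|` be invertible. Then `T` has the bounded shadowing property iff its
Aluthge transform `Δ(T) = |T|^{1/2} U |T|^{1/2}` does. -/
theorem boundedShadowing_iff_aluthge {H : Type*} [NormedAddCommGroup H]
    [InnerProductSpace ℂ H] [CompleteSpace H] (T U R : H →L[ℂ] H)
    (hR : 0 ≤ R) (hR2 : R * R = adjoint T * T) (hT : T = U * R)
    (hinv : IsUnit T) :
    BoundedShadowingOp T ↔ BoundedShadowingOp (CFC.sqrt R * U * CFC.sqrt R) := by
  set s := CFC.sqrt R with hs
  have hss : s * s = R := CFC.sqrt_mul_sqrt_self R hR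
  have hRunit : IsUnit R := by
    apply isUnit_of_isUnit_sq
    rw [hR2]
    have h3 : IsUnit (star T) := hinv.star
    rw [star_eq_adjoint] at h3
    exact h3.mul hinv
  have hsunit : IsUnit s := isUnit_of_isUnit_sq (by rw [hss]; exact hRunit)
  obtain ⟨u, hu⟩ := hsunit
  have h1 : s * ↑u⁻¹ = 1 := by rw [← hu, Units.mul_inv]
  have h2 : (↑u⁻¹ : H →L[ℂ] H) * s = 1 := by rw [← hu, Units.inv_mul]
  have hrel : s * T = (s * U * s) * s := by
    rw [hT, ← mul_assoc, mul_assoc (s * U) s s, hss]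
  constructor
  · intro h
    exact bsh_conj T (s * U * s) s ↑u⁻¹ h1 h2 hrel h
  · intro h
    have hrel2 : (↑u⁻¹ : H →L[ℂ] H) * (s * U * s) = T * ↑u⁻¹ := by
      calc (↑u⁻¹ : H →L[ℂ] H) * (s * U * s)
          = ↑u⁻¹ * (s * U * s) * (s * ↑u⁻¹) := by rw [h1, mul_one]
        _ = ↑u⁻¹ * (s * U * s * s) * ↑u⁻¹ := by simp only [mul_assoc]
        _ = ↑u⁻¹ * (s * T) * ↑u⁻¹ := by rw [hrel]
        _ = (↑u⁻¹ * s) * (T * ↑u⁻¹) := by simp only [mul_assoc]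
        _ = T * ↑u⁻¹ := by rw [h2, one_mul]
    exact bsh_conj (s * U * s) T (↑u⁻¹) s h2 h1 hrel2 h
end

section
/- Let T be a bounded linear operator on a Hilbert space with polar decomposition T = U|T| (U an isometry) and λ ∈ (0,1). Then T is quasi-hyperbolic if and only if its λ-Aluthge transform Δ_λ(T) = |T|^λ U |T|^{1-λ} is quasi-hyperbolic. -/
def QuasiHyperbolic {H : Type*} [NormedAddCommGroup H] [InnerProductSpace ℂ H]
    [CompleteSpace H] (T : H →L[ℂ] H) : Prop :=
  ∃ n : ℕ, ∀ x : H, 2 * ‖(T ^ n) x‖ ≤ max ‖(T ^ (2 * n)) x‖ ‖x‖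

/-!
With `A = U |T|^{1-λ}` and `B = |T|^λ` we have `T = A B` and `Δ_λ(T) = B A`, so it suffices to see
that quasi-hyperbolicity passes from `A B` to `B A`.

If `S` is quasi-hyperbolic with exponent `n`, then along any orbit `a j = ‖S^{jn} y‖` satisfies
`2 a (j+1) ≤ max (a (j+2)) (a j)`: once the sequence doubles it keeps doubling, and before that it
halves. So either `a k ≤ a 0 / 2^k` or `a (k+p) ≥ 2^p a k`. Applied to `S = A B` and `y = A x`,
with `(B A)^{kn+1} = B (A B)^{kn} A` and `(A B)^q A = A (B A)^q`, this dichotomy gives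
`2 ‖(B A)^{kn+1} x‖ ≤ max ‖(B A)^{2(kn+1)} x‖ ‖x‖` as soon as `2^k` dominates the norms of `A`, `B`
and `(B A)^{2n-2}`.
-/

section DoublingDichotomy

variable {a : ℕ → ℝ} (h0 : ∀ j, 0 ≤ a j) (h : ∀ j, 2 * a (j + 1) ≤ max (a (j + 2)) (a j))
include h0 h

lemma doubling_succ {j : ℕ} (hj : 2 * a (j + 1) ≤ a (j + 2)) :
    2 * a (j + 1 + 1) ≤ a (j + 1 + 2) := by
  rcases le_max_iff.mp (h (j + 1)) with h' | h'
  · exact h'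
  · linarith [h0 (j + 2), h0 (j + 3)]

lemma doubling_of_le {j i : ℕ} (hj : 2 * a (j + 1) ≤ a (j + 2)) (hji : j ≤ i) :
    2 * a (i + 1) ≤ a (i + 2) :=
  Nat.le_induction hj (fun _ _ ih ↦ doubling_succ h0 h ih) i hji

lemma two_pow_mul_le_of_doubling {j : ℕ} (hj : 2 * a (j + 1) ≤ a (j + 2)) (p : ℕ) :
    2 ^ p * a (j + 1) ≤ a (j + p + 1) := by
  induction p with
  | zero => simp
  | succ p ih =>
    calc 2 ^ (p + 1) * a (j + 1) = 2 * (2 ^ p * a (j + 1)) := by ring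
      _ ≤ 2 * a (j + p + 1) := by linarith
      _ ≤ a (j + p + 2) := doubling_of_le h0 h hj (Nat.le_add_right j p)

lemma two_pow_mul_le_of_not_doubling {k : ℕ} (hk : ¬ 2 * a (k + 1) ≤ a (k + 2)) :
    2 ^ (k + 1) * a (k + 1) ≤ a 0 := by
  induction k with
  | zero => simpa using (le_max_iff.mp (h 0)).resolve_left hk
  | succ k ih =>
    have hhalf : 2 * a (k + 2) ≤ a (k + 1) := (le_max_iff.mp (h (k + 1))).resolve_left hk
    calc 2 ^ (k + 1 + 1) * a (k + 1 + 1) = 2 ^ (k + 1) * (2 * a (k + 2)) := by ring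
      _ ≤ 2 ^ (k + 1) * a (k + 1) := by gcongr
      _ ≤ a 0 := ih (mt (doubling_succ h0 h) hk)

lemma two_pow_mul_le_or (k p : ℕ) : 2 ^ k * a k ≤ a 0 ∨ 2 ^ p * a k ≤ a (k + p) := by
  cases k with
  | zero => simp
  | succ k =>
    by_cases hk : 2 * a (k + 1) ≤ a (k + 2)
    · right
      rw [add_right_comm]
      exact two_pow_mul_le_of_doubling h0 h hk p
    · exact .inl (two_pow_mul_le_of_not_doubling h0 h hk)

end DoublingDichotomy

lemma le_of_two_pow_mul_le {u v c : ℝ} {k : ℕ} (hc : c ≤ 2 ^ k) (hv : 0 ≤ v)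
    (h : 2 ^ k * u ≤ c * v) : u ≤ v :=
  le_of_mul_le_mul_left (h.trans (mul_le_mul_of_nonneg_right hc hv)) (by positivity)

namespace ContinuousLinearMap

variable {𝕜 E : Type*} [NontriviallyNormedField 𝕜] [NormedAddCommGroup E] [NormedSpace 𝕜 E]

lemma two_pow_mul_norm_pow_le_or {S : E →L[𝕜] E} {n : ℕ}
    (hn : ∀ x, 2 * ‖(S ^ n) x‖ ≤ max ‖(S ^ (2 * n)) x‖ ‖x‖) (x : E) (k p : ℕ) :
    2 ^ k * ‖(S ^ (k * n)) x‖ ≤ ‖x‖ ∨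
      2 ^ p * ‖(S ^ (k * n)) x‖ ≤ ‖(S ^ ((k + p) * n)) x‖ := by
  have horbit : ∀ j, 2 * ‖(S ^ ((j + 1) * n)) x‖ ≤
      max ‖(S ^ ((j + 2) * n)) x‖ ‖(S ^ (j * n)) x‖ := by
    intro j
    have hsucc : (j + 1) * n = n + j * n := by ring
    have hsucc2 : (j + 2) * n = 2 * n + j * n := by ring
    simpa only [hsucc, hsucc2, pow_add, mul_apply_eq_comp] using hn ((S ^ (j * n)) x)
  simpa using two_pow_mul_le_or (fun j ↦ norm_nonneg ((S ^ (j * n)) x)) horbit k p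

lemma pow_mul_comm_apply (A B : E →L[𝕜] E) (q : ℕ) (x : E) :
    ((A * B) ^ q) (A x) = A (((B * A) ^ q) x) := by
  rw [← mul_apply_eq_comp, ← mul_apply_eq_comp, (SemiconjBy.pow_right (mul_assoc A B A).symm q).eq]

lemma norm_mul_pow_succ_apply_le (A B : E →L[𝕜] E) (m : ℕ) (x : E) :
    ‖((B * A) ^ (m + 1)) x‖ ≤ ‖B‖ * ‖((A * B) ^ m) (A x)‖ := by
  rw [pow_succ', mul_apply_eq_comp, mul_apply_eq_comp, ← pow_mul_comm_apply]
  exact B.le_opNorm _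

lemma exists_two_mul_norm_pow_le_of_mul_comm (A B : E →L[𝕜] E) {n : ℕ} (hn0 : 0 < n)
    (hn : ∀ x, 2 * ‖((A * B) ^ n) x‖ ≤ max ‖((A * B) ^ (2 * n)) x‖ ‖x‖) :
    ∃ m, ∀ x, 2 * ‖((B * A) ^ m) x‖ ≤ max ‖((B * A) ^ (2 * m)) x‖ ‖x‖ := by
  obtain ⟨n, rfl⟩ : ∃ m, n = m + 1 := ⟨n - 1, by omega⟩
  set D := ‖(B * A) ^ (2 * n)‖
  obtain ⟨k, hk⟩ := pow_unbounded_of_one_lt (2 * ‖B‖ * ‖A‖ * max D 1) one_lt_two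
  have hC : 2 * ‖B‖ * ‖A‖ ≤ 2 ^ k :=
    (le_mul_of_one_le_right (by positivity) (le_max_right D 1)).trans hk.le
  have hCD : 2 * ‖B‖ * ‖A‖ * D ≤ 2 ^ k :=
    (mul_le_mul_of_nonneg_left (le_max_left D 1) (by positivity)).trans hk.le
  set M := k * (n + 1) + 1
  refine ⟨M, fun x ↦ ?_⟩
  have hlow : 2 ^ k * (2 * ‖((B * A) ^ M) x‖) ≤
      2 * ‖B‖ * (2 ^ k * ‖((A * B) ^ (k * (n + 1))) (A x)‖) := by
    nlinarith [norm_mul_pow_succ_apply_le A B (k * (n + 1)) x, pow_pos (two_pos : (0 : ℝ) < 2) k]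
  have hhigh : ‖((A * B) ^ ((k + (k + 2)) * (n + 1))) (A x)‖ ≤
      ‖A‖ * (D * ‖((B * A) ^ (2 * M)) x‖) := by
    rw [pow_mul_comm_apply, show (k + (k + 2)) * (n + 1) = 2 * n + 2 * M by ring, pow_add,
      mul_apply_eq_comp]
    exact (A.le_opNorm _).trans (mul_le_mul_of_nonneg_left (le_opNorm _ _) (norm_nonneg A))
  rcases two_pow_mul_norm_pow_le_or hn (A x) k (k + 2) with hsmall | hlarge
  · refine le_max_of_le_right (le_of_two_pow_mul_le hC (norm_nonneg x) (hlow.trans ?_))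
    calc 2 * ‖B‖ * (2 ^ k * ‖((A * B) ^ (k * (n + 1))) (A x)‖)
        ≤ 2 * ‖B‖ * (‖A‖ * ‖x‖) :=
          mul_le_mul_of_nonneg_left (hsmall.trans (A.le_opNorm x)) (by positivity)
      _ = 2 * ‖B‖ * ‖A‖ * ‖x‖ := by ring
  · refine le_max_of_le_left (le_of_two_pow_mul_le hCD (norm_nonneg _) (hlow.trans ?_))
    have hgrowth : 2 ^ k * ‖((A * B) ^ (k * (n + 1))) (A x)‖ ≤
        ‖((A * B) ^ ((k + (k + 2)) * (n + 1))) (A x)‖ :=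
      le_trans (by gcongr; exacts [one_le_two, Nat.le_add_right k 2]) hlarge
    calc 2 * ‖B‖ * (2 ^ k * ‖((A * B) ^ (k * (n + 1))) (A x)‖)
        ≤ 2 * ‖B‖ * (‖A‖ * (D * ‖((B * A) ^ (2 * M)) x‖)) :=
          mul_le_mul_of_nonneg_left (hgrowth.trans hhigh) (by positivity)
      _ = 2 * ‖B‖ * ‖A‖ * D * ‖((B * A) ^ (2 * M)) x‖ := by ring

end ContinuousLinearMap

lemma CFC.rpow_add_of_nonneg {A : Type*} [PartialOrder A] [Ring A] [StarRing A]
    [TopologicalSpace A] [StarOrderedRing A] [Algebra ℝ A]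
    [ContinuousFunctionalCalculus ℝ A IsSelfAdjoint] [NonnegSpectrumClass ℝ A]
    (a : A) {x y : ℝ} (hx : 0 ≤ x) (hy : 0 ≤ y) : a ^ (x + y) = a ^ x * a ^ y := by
  simp only [CFC.rpow_def]
  rw [← cfc_mul _ _ a (NNReal.continuous_rpow_const hx).continuousOn
    (NNReal.continuous_rpow_const hy).continuousOn]
  simp only [NNReal.rpow_add_of_nonneg _ hx hy]

section QuasiHyperbolic

variable {H : Type*} [NormedAddCommGroup H] [InnerProductSpace ℂ H] [CompleteSpace H]

lemma QuasiHyperbolic.exists_pos {T : H →L[ℂ] H} (hT : QuasiHyperbolic T) :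
    ∃ n, 0 < n ∧ ∀ x, 2 * ‖(T ^ n) x‖ ≤ max ‖(T ^ (2 * n)) x‖ ‖x‖ := by
  obtain ⟨n, hn⟩ := hT
  rcases Nat.eq_zero_or_pos n with rfl | hn0
  · have hzero (x : H) : x = 0 := by
      have h2 : 2 * ‖x‖ ≤ ‖x‖ := by simpa using hn x
      exact norm_le_zero_iff.mp (by linarith)
    exact ⟨1, one_pos, fun x ↦ by simp [hzero x]⟩
  · exact ⟨n, hn0, hn⟩

lemma QuasiHyperbolic.of_mul_comm {A B : H →L[ℂ] H} (h : QuasiHyperbolic (A * B)) :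
    QuasiHyperbolic (B * A) :=
  have ⟨_, hn0, hn⟩ := h.exists_pos
  ContinuousLinearMap.exists_two_mul_norm_pow_le_of_mul_comm A B hn0 hn

lemma quasiHyperbolic_mul_comm (A B : H →L[ℂ] H) :
    QuasiHyperbolic (A * B) ↔ QuasiHyperbolic (B * A) :=
  ⟨.of_mul_comm, .of_mul_comm⟩

end QuasiHyperbolic

open ContinuousLinearMap in
theorem quasiHyperbolic_iff_lambda_aluthge_general {H : Type*} [NormedAddCommGroup H]
    [InnerProductSpace ℂ H] [CompleteSpace H] (T U R : H →L[ℂ] H) (l : ℝ)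
    (hl : l ∈ Set.Ioo (0 : ℝ) 1)
    (hR : 0 ≤ R) (hT : T = U * R) :
    QuasiHyperbolic T ↔ QuasiHyperbolic (CFC.rpow R l * U * CFC.rpow R (1 - l)) := by
  have hsplit : T = U * CFC.rpow R (1 - l) * CFC.rpow R l := by
    rw [hT, mul_assoc, CFC.rpow_eq_pow, CFC.rpow_eq_pow,
      ← CFC.rpow_add_of_nonneg R (by linarith [hl.2]) hl.1.le, sub_add_cancel, CFC.rpow_one R]
  rw [hsplit, mul_assoc (CFC.rpow R l)]
  exact quasiHyperbolic_mul_comm _ _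

open ContinuousLinearMap in
/-- For `T = U|T|` with `U` an isometry and `λ ∈ (0,1)`, `T` is quasi-hyperbolic iff
its `λ`-Aluthge transform `Δ_λ(T) = |T|^λ U |T|^{1-λ}` is quasi-hyperbolic. -/
theorem quasiHyperbolic_iff_lambda_aluthge {H : Type*} [NormedAddCommGroup H]
    [InnerProductSpace ℂ H] [CompleteSpace H] (T U R : H →L[ℂ] H) (l : ℝ)
    (hl : l ∈ Set.Ioo (0 : ℝ) 1)
    (hR : 0 ≤ R) (hR2 : R * R = adjoint T * T) (hT : T = U * R)
    (hU : ∀ x : H, ‖U x‖ = ‖x‖) :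
    QuasiHyperbolic T ↔ QuasiHyperbolic (CFC.rpow R l * U * CFC.rpow R (1 - l)) :=
  quasiHyperbolic_iff_lambda_aluthge_general T U R l hl hR hT
end

section
/- If T is a hyperbolic invertible bounded linear operator on a Hilbert space (σ(T) ∩ 𝕋 = ∅), then T is quasi-hyperbolic. -/
set_option synthInstance.maxHeartbeats 1000000
set_option maxHeartbeats 1000000

open Finset

private lemma root_sum {N : ℕ} {ζ : ℂ} (hζ : IsPrimitiveRoot ζ N) (m : ℕ) :
    ∑ j ∈ range N, ζ ^ (j * m) = if N ∣ m then (N : ℂ) else 0 := by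
  have hpow : ∀ j, ζ ^ (j * m) = (ζ ^ m) ^ j := fun j => by rw [← pow_mul, Nat.mul_comm]
  simp_rw [hpow]
  by_cases h : N ∣ m
  · rw [if_pos h]
    have h1 : ζ ^ m = 1 := (hζ.pow_eq_one_iff_dvd m).2 h
    simp [h1]
  · rw [if_neg h]
    have h1 : ζ ^ m ≠ 1 := fun hh => h ((hζ.pow_eq_one_iff_dvd m).1 hh)
    rw [geom_sum_eq h1]
    have h2 : (ζ ^ m) ^ N = 1 := by rw [← pow_mul, mul_comm, pow_mul, hζ.pow_eq_one, one_pow]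
    rw [h2, sub_self, zero_div]

private lemma key_identity {A : Type*} [Ring A] [Algebra ℂ A] (T : A) {n : ℕ} (hn : 2 ≤ n)
    {ζ : ℂ} (hζ : IsPrimitiveRoot ζ (2 * n - 1)) :
    ∑ j ∈ range (2 * n - 1), ζ ^ (j * n) •
        ((∑ k ∈ range n, ζ ^ (j * k) • T ^ (n - 1 - k)) *
         (∑ l ∈ range n, ζ ^ (j * l) • T ^ (n - 1 - l)))
      = (((2 * n - 1) * n : ℕ) : ℂ) • T ^ (n - 1) := by
  have expand : ∀ j, ζ ^ (j * n) •
        ((∑ k ∈ range n, ζ ^ (j * k) • T ^ (n - 1 - k)) *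
         (∑ l ∈ range n, ζ ^ (j * l) • T ^ (n - 1 - l)))
      = ∑ k ∈ range n, ∑ l ∈ range n,
          ζ ^ (j * (n + k + l)) • T ^ ((n - 1 - k) + (n - 1 - l)) := by
    intro j
    rw [Finset.sum_mul_sum, Finset.smul_sum]
    refine Finset.sum_congr rfl fun k _ => ?_
    rw [Finset.smul_sum]
    refine Finset.sum_congr rfl fun l _ => ?_
    rw [smul_mul_smul_comm, smul_smul, ← pow_add, ← pow_add, ← pow_add]
    congr 2
    ring
  simp_rw [expand]
  rw [Finset.sum_comm]
  have swap2 : ∀ k ∈ range n,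
      (∑ j ∈ range (2*n-1), ∑ l ∈ range n, ζ ^ (j * (n + k + l)) • T ^ ((n-1-k)+(n-1-l)))
      = ∑ l ∈ range n, (∑ j ∈ range (2*n-1), ζ ^ (j * (n + k + l))) • T ^ ((n-1-k)+(n-1-l)) := by
    intro k _
    rw [Finset.sum_comm]
    exact Finset.sum_congr rfl fun l _ => (Finset.sum_smul).symm
  rw [Finset.sum_congr rfl swap2]
  have inner : ∀ k ∈ range n, ∀ l ∈ range n,
      (∑ j ∈ range (2*n-1), ζ ^ (j * (n + k + l))) • T ^ ((n-1-k)+(n-1-l))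
      = if l = n - 1 - k then ((2*n-1 : ℕ) : ℂ) • T ^ (n-1) else 0 := by
    intro k hk l hl
    rw [mem_range] at hk hl
    rw [root_sum hζ]
    have hiff : (2*n-1) ∣ (n + k + l) ↔ l = n - 1 - k := by
      constructor
      · rintro ⟨c, hc⟩
        have h0 : c ≠ 0 := by rintro rfl; omega
        have h2 : c < 2 := by
          by_contra hge
          push_neg at hge
          have : (2*n-1) * 2 ≤ (2*n-1) * c := Nat.mul_le_mul_left _ hge
          omega
        have hc1 : c = 1 := by omega
        subst hc1
        omega
      · intro h; exact ⟨1, by omega⟩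
    rw [if_congr hiff rfl rfl]
    split_ifs with h
    · have he : (n-1-k)+(n-1-l) = n-1 := by omega
      rw [he]
    · rw [zero_smul]
  calc ∑ k ∈ range n, ∑ l ∈ range n,
        (∑ j ∈ range (2*n-1), ζ ^ (j * (n + k + l))) • T ^ ((n-1-k)+(n-1-l))
      = ∑ k ∈ range n, ∑ l ∈ range n,
          (if l = n - 1 - k then ((2*n-1 : ℕ) : ℂ) • T ^ (n-1) else 0) := by
        refine Finset.sum_congr rfl fun k hk => Finset.sum_congr rfl fun l hl => ?_
        exact inner k hk l hl
    _ = ∑ k ∈ range n, ((2*n-1 : ℕ) : ℂ) • T ^ (n-1) := by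
        refine Finset.sum_congr rfl fun k hk => ?_
        rw [mem_range] at hk
        rw [Finset.sum_ite_eq' (range n) (n-1-k) (fun _ => ((2*n-1 : ℕ) : ℂ) • T ^ (n-1))]
        rw [if_pos (mem_range.2 (by omega))]
    _ = (((2 * n - 1) * n : ℕ) : ℂ) • T ^ (n - 1) := by
        rw [Finset.sum_const, card_range, ← Nat.cast_smul_eq_nsmul ℂ, smul_smul]
        congr 1
        push_cast
        ring


private lemma point_bound {H : Type*} [NormedAddCommGroup H] [InnerProductSpace ℂ H]
    [CompleteSpace H] (T : H →L[ℂ] H) {z : ℂ} (hz : ‖z‖ = 1)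
    (hu : IsUnit (algebraMap ℂ (H →L[ℂ] H) z - T)) {M : ℝ}
    (hM : ‖Ring.inverse (algebraMap ℂ (H →L[ℂ] H) z - T)‖ ≤ M) (n : ℕ) (x : H) :
    ‖((∑ k ∈ range n, z ^ k • T ^ (n - 1 - k)) *
      (∑ l ∈ range n, z ^ l • T ^ (n - 1 - l))) (T x)‖
      ≤ M * M * ‖T‖ * (‖x‖ + 2 * ‖(T ^ n) x‖ + ‖(T ^ (2 * n)) x‖) := by
  set u : H →L[ℂ] H := algebraMap ℂ (H →L[ℂ] H) z - T with hu_def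
  set g : H →L[ℂ] H := Ring.inverse u with hg_def
  set Q : H →L[ℂ] H := ∑ k ∈ range n, z ^ k • T ^ (n - 1 - k) with hQ_def
  set D : H →L[ℂ] H := algebraMap ℂ (H →L[ℂ] H) (z ^ n) - T ^ n with hD_def
  have hM0 : 0 ≤ M := le_trans (norm_nonneg _) hM
  -- commutation facts
  have hcommT : Commute (algebraMap ℂ (H →L[ℂ] H) z) T := (Algebra.commutes z T)
  have hTu : Commute T u := (Commute.sub_right hcommT.symm (Commute.refl T))
  have hDu' : Commute u D := by
    have h1 : Commute u (algebraMap ℂ (H →L[ℂ] H) (z ^ n)) := (Algebra.commutes (z ^ n) u).symm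
    have h2 : Commute u (T ^ n) := (hTu.symm.pow_right n)
    exact h1.sub_right h2
  -- g facts via units
  have hUspec : (hu.unit : H →L[ℂ] H) = u := hu.unit_spec
  have hginv : g = ↑hu.unit⁻¹ := by rw [hg_def, ← Ring.inverse_unit hu.unit, hUspec]
  have hTg : Commute T g := by
    rw [hginv]; exact Commute.units_inv_right (by rw [hUspec]; exact hTu)
  have hDg : Commute D g := by
    rw [hginv]; exact Commute.units_inv_right (by rw [hUspec]; exact hDu'.symm)
  have hug : u * g = 1 := Ring.mul_inverse_cancel u hu
  have hgu : g * u = 1 := Ring.inverse_mul_cancel u hu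
  -- Q * u = D
  have hQu : Q * u = D := by
    have h := hcommT.geom_sum₂_mul n
    rw [hQ_def, hD_def, hu_def]
    rw [map_pow, ← h]
    congr 1
    exact Finset.sum_congr rfl fun k _ => by rw [← map_pow, ← Algebra.smul_def]
  have hQ : Q = D * g := by
    calc Q = Q * (u * g) := by rw [hug, mul_one]
    _ = (Q * u) * g := by rw [mul_assoc]
    _ = D * g := by rw [hQu]
  -- vector-level swaps
  have swapDg : ∀ v : H, D (g v) = g (D v) := fun v => by
    have h := DFunLike.congr_fun hDg.eq v
    simpa [ContinuousLinearMap.mul_apply] using h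
  have hTD : Commute T D := by
    have h1 : Commute T (algebraMap ℂ (H →L[ℂ] H) (z ^ n)) := (Algebra.commutes (z ^ n) T).symm
    exact h1.sub_right (Commute.pow_right (Commute.refl T) n)
  have swapDT : ∀ v : H, D (T v) = T (D v) := fun v => by
    have h := DFunLike.congr_fun hTD.eq v
    simpa [ContinuousLinearMap.mul_apply] using h.symm
  have happ : (Q * Q) (T x) = g (g (T (D (D x)))) := by
    rw [ContinuousLinearMap.mul_apply, hQ]
    calc (D * g) ((D * g) (T x)) = D (g (D (g (T x)))) := rfl
      _ = g (D (D (g (T x)))) := by rw [swapDg]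
      _ = g (D (g (D (T x)))) := by rw [swapDg]
      _ = g (g (D (D (T x)))) := by rw [swapDg]
      _ = g (g (D (T (D x)))) := by rw [swapDT]
      _ = g (g (T (D (D x)))) := by rw [swapDT]
  -- explicit form of D v
  have hDv : ∀ v : H, D v = z ^ n • v - (T ^ n) v := fun v => by
    simp [hD_def, Algebra.algebraMap_eq_smul_one, ContinuousLinearMap.sub_apply,
      ContinuousLinearMap.smul_apply, ContinuousLinearMap.one_apply, smul_smul]
  have hzn : ‖z ^ n‖ = 1 := by rw [norm_pow, hz, one_pow]
  have h2n : (T ^ (2 * n)) x = (T ^ n) ((T ^ n) x) := by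
    rw [two_mul, pow_add]; rfl
  have hDD : ‖D (D x)‖ ≤ ‖x‖ + 2 * ‖(T ^ n) x‖ + ‖(T ^ (2 * n)) x‖ := by
    have e1 : D (D x) = z ^ n • (z ^ n • x - (T ^ n) x)
        - (z ^ n • (T ^ n) x - (T ^ n) ((T ^ n) x)) := by
      rw [hDv, hDv, map_sub, map_smul]
    rw [e1]
    have t1 : ‖z ^ n • (z ^ n • x - (T ^ n) x) - (z ^ n • (T ^ n) x - (T ^ n) ((T ^ n) x))‖
        ≤ ‖z ^ n • (z ^ n • x - (T ^ n) x)‖ + ‖z ^ n • (T ^ n) x - (T ^ n) ((T ^ n) x)‖ :=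
      norm_sub_le _ _
    have t2 : ‖z ^ n • (z ^ n • x - (T ^ n) x)‖ ≤ ‖x‖ + ‖(T ^ n) x‖ := by
      rw [norm_smul, hzn, one_mul]
      refine le_trans (norm_sub_le _ _) ?_
      rw [norm_smul, hzn, one_mul]
    have t3 : ‖z ^ n • (T ^ n) x - (T ^ n) ((T ^ n) x)‖ ≤ ‖(T ^ n) x‖ + ‖(T ^ (2 * n)) x‖ := by
      refine le_trans (norm_sub_le _ _) ?_
      rw [norm_smul, hzn, one_mul, h2n]
    linarith
  -- final bound
  rw [happ]
  have hgM : ∀ v : H, ‖g v‖ ≤ M * ‖v‖ := fun v =>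
    le_trans (g.le_opNorm v) (mul_le_mul_of_nonneg_right hM (norm_nonneg v))
  calc ‖g (g (T (D (D x))))‖ ≤ M * ‖g (T (D (D x)))‖ := hgM _
    _ ≤ M * (M * ‖T (D (D x))‖) := by
        exact mul_le_mul_of_nonneg_left (hgM _) hM0
    _ ≤ M * (M * (‖T‖ * ‖D (D x)‖)) := by
        refine mul_le_mul_of_nonneg_left (mul_le_mul_of_nonneg_left ?_ hM0) hM0
        exact T.le_opNorm _
    _ ≤ M * M * ‖T‖ * (‖x‖ + 2 * ‖(T ^ n) x‖ + ‖(T ^ (2 * n)) x‖) := by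
        have := mul_le_mul_of_nonneg_left hDD (norm_nonneg T)
        nlinarith [norm_nonneg (D (D x)), norm_nonneg T, mul_le_mul_of_nonneg_left
          (mul_le_mul_of_nonneg_left hDD (norm_nonneg T)) (mul_nonneg hM0 hM0)]

/-- A hyperbolic invertible bounded operator (`σ(T) ∩ 𝕋 = ∅`) is quasi-hyperbolic. -/
theorem quasiHyperbolic_of_hyperbolic {H : Type*} [NormedAddCommGroup H]
    [InnerProductSpace ℂ H] [CompleteSpace H] (T : H →L[ℂ] H) (hinv : IsUnit T)
    (hhyp : spectrum ℂ T ∩ {z : ℂ | ‖z‖ = 1} = ∅) :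
    QuasiHyperbolic T := by
  classical
  show ∃ n : ℕ, ∀ x : H, 2 * ‖(T ^ n) x‖ ≤ max ‖(T ^ (2 * n)) x‖ ‖x‖
  -- every point of the unit circle is in the resolvent set
  have hcirc : ∀ z : ℂ, ‖z‖ = 1 → IsUnit (algebraMap ℂ (H →L[ℂ] H) z - T) := by
    intro z hz
    rw [← spectrum.notMem_iff]
    intro hmem
    have : z ∈ spectrum ℂ T ∩ {z : ℂ | ‖z‖ = 1} := ⟨hmem, hz⟩
    rw [hhyp] at this
    exact this
  -- uniform bound on the resolvent over the circle
  obtain ⟨M, hM1, hMb⟩ : ∃ M : ℝ, 1 ≤ M ∧ ∀ z : ℂ, ‖z‖ = 1 →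
      ‖Ring.inverse (algebraMap ℂ (H →L[ℂ] H) z - T)‖ ≤ M := by
    have hsc : IsCompact (Metric.sphere (0:ℂ) 1) := isCompact_sphere 0 1
    have hcont : ContinuousOn
        (fun z : ℂ => ‖Ring.inverse (algebraMap ℂ (H →L[ℂ] H) z - T)‖)
        (Metric.sphere 0 1) := by
      apply ContinuousOn.norm
      intro z hzs
      have hz1 : ‖z‖ = 1 := mem_sphere_zero_iff_norm.mp hzs
      have hu := hcirc z hz1
      apply ContinuousAt.continuousWithinAt
      have h1 : ContinuousAt (fun z : ℂ => algebraMap ℂ (H →L[ℂ] H) z - T) z :=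
        ((continuous_algebraMap ℂ (H →L[ℂ] H)).continuousAt).sub continuousAt_const
      have h2 : ContinuousAt (Ring.inverse : (H →L[ℂ] H) → (H →L[ℂ] H))
          (algebraMap ℂ (H →L[ℂ] H) z - T) := by
        have := NormedRing.inverse_continuousAt hu.unit
        rwa [hu.unit_spec] at this
      show ContinuousAt ((Ring.inverse : (H →L[ℂ] H) → (H →L[ℂ] H)) ∘
        (fun z : ℂ => algebraMap ℂ (H →L[ℂ] H) z - T)) z
      exact ContinuousAt.comp h2 h1
    obtain ⟨z₀, hz₀, hmax⟩ := hsc.exists_isMaxOn ⟨1, by simp⟩ hcont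
    refine ⟨max ‖Ring.inverse (algebraMap ℂ (H →L[ℂ] H) z₀ - T)‖ 1, le_max_right _ _, ?_⟩
    intro z hz
    exact le_trans (hmax (mem_sphere_zero_iff_norm.mpr hz)) (le_max_left _ _)
  set C : ℝ := M * M * ‖T‖ + 1 with hC_def
  have hC1 : 1 ≤ C := by
    have h0 : (0:ℝ) ≤ M * M * ‖T‖ := by positivity
    linarith
  have hC0 : 0 < C := lt_of_lt_of_le one_pos hC1
  -- choose n
  set n : ℕ := max 2 ⌈6 * C⌉₊ with hn_def
  have hn2 : 2 ≤ n := le_max_left _ _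
  have hn6 : 6 * C ≤ (n : ℝ) := by
    calc 6 * C ≤ (⌈6 * C⌉₊ : ℝ) := Nat.le_ceil _
    _ ≤ (n : ℝ) := Nat.cast_le.2 (le_max_right _ _)
  refine ⟨n, fun x => ?_⟩
  -- primitive root setup
  set N : ℕ := 2 * n - 1 with hN_def
  have hNpos : 0 < N := by omega
  set ζ : ℂ := Complex.exp (2 * Real.pi * Complex.I / N) with hζ_def
  have hζ : IsPrimitiveRoot ζ N := Complex.isPrimitiveRoot_exp N (by omega)
  have hζ1 : ‖ζ‖ = 1 := by
    have h1 : ‖ζ‖ ^ N = 1 := by rw [← norm_pow, hζ.pow_eq_one, norm_one]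
    rcases lt_trichotomy ‖ζ‖ 1 with h | h | h
    · exfalso
      have := pow_lt_one₀ (norm_nonneg ζ) h hNpos.ne'
      rw [h1] at this; exact lt_irrefl _ this
    · exact h
    · exfalso
      have := one_lt_pow₀ h hNpos.ne'
      rw [h1] at this; exact lt_irrefl _ this
  -- the key estimate
  have hmain : (N : ℝ) * n * ‖(T ^ n) x‖
      ≤ (N : ℝ) * (C * (‖x‖ + 2 * ‖(T ^ n) x‖ + ‖(T ^ (2 * n)) x‖)) := by
    have hid := key_identity T hn2 hζ
    have happ := congrArg (fun f : H →L[ℂ] H => f (T x)) hid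
    simp only [ContinuousLinearMap.sum_apply, ContinuousLinearMap.smul_apply] at happ
    -- RHS : (N*n) • T^{n-1} (T x) = (N*n) • T^n x
    have hRHS : (T ^ (n - 1)) (T x) = (T ^ n) x := by
      have : T ^ (n - 1) * T = T ^ n := by
        rw [← pow_succ]
        congr 1
        omega
      rw [← this]; rfl
    rw [hRHS] at happ
    have hnorm : ‖(((N * n : ℕ)) : ℂ) • (T ^ n) x‖ = (N : ℝ) * n * ‖(T ^ n) x‖ := by
      rw [norm_smul, Complex.norm_natCast]
      push_cast
      ring
    have hsum_le : ‖∑ j ∈ range N, ζ ^ (j * n) •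
        ((∑ k ∈ range n, ζ ^ (j * k) • T ^ (n - 1 - k)) *
         (∑ l ∈ range n, ζ ^ (j * l) • T ^ (n - 1 - l))) (T x)‖
        ≤ (N : ℝ) * (C * (‖x‖ + 2 * ‖(T ^ n) x‖ + ‖(T ^ (2 * n)) x‖)) := by
      refine le_trans (norm_sum_le _ _) ?_
      have hbound : ∀ j ∈ range N, ‖ζ ^ (j * n) •
          ((∑ k ∈ range n, ζ ^ (j * k) • T ^ (n - 1 - k)) *
           (∑ l ∈ range n, ζ ^ (j * l) • T ^ (n - 1 - l))) (T x)‖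
          ≤ C * (‖x‖ + 2 * ‖(T ^ n) x‖ + ‖(T ^ (2 * n)) x‖) := by
        intro j _
        rw [norm_smul]
        have hzj : ‖ζ ^ j‖ = 1 := by rw [norm_pow, hζ1, one_pow]
        have hzjn : ‖ζ ^ (j * n)‖ = 1 := by rw [norm_pow, hζ1, one_pow]
        rw [hzjn, one_mul]
        have hform : ∀ m : ℕ, ζ ^ (j * m) = (ζ ^ j) ^ m := fun m => by rw [← pow_mul]
        simp_rw [hform]
        have hpb := point_bound T hzj (hcirc _ hzj) (hMb _ hzj) n x
        refine le_trans hpb ?_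
        have hnn : (0:ℝ) ≤ ‖x‖ + 2 * ‖(T ^ n) x‖ + ‖(T ^ (2 * n)) x‖ := by positivity
        have : M * M * ‖T‖ ≤ C := by rw [hC_def]; linarith
        exact mul_le_mul_of_nonneg_right this hnn
      refine le_trans (Finset.sum_le_sum hbound) ?_
      rw [Finset.sum_const, card_range, nsmul_eq_mul]
    calc (N : ℝ) * n * ‖(T ^ n) x‖ = ‖(((N * n : ℕ)) : ℂ) • (T ^ n) x‖ := hnorm.symm
      _ = ‖∑ j ∈ range N, ζ ^ (j * n) •
          ((∑ k ∈ range n, ζ ^ (j * k) • T ^ (n - 1 - k)) *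
           (∑ l ∈ range n, ζ ^ (j * l) • T ^ (n - 1 - l))) (T x)‖ := by rw [happ]
      _ ≤ _ := hsum_le
  -- cancel N and conclude
  have hNr : (0:ℝ) < N := by exact_mod_cast hNpos
  have hest : (n : ℝ) * ‖(T ^ n) x‖ ≤ C * (‖x‖ + 2 * ‖(T ^ n) x‖ + ‖(T ^ (2 * n)) x‖) := by
    have := hmain
    rw [mul_assoc] at this
    exact le_of_mul_le_mul_left this hNr
  have hxle : ‖x‖ ≤ max ‖(T ^ (2 * n)) x‖ ‖x‖ := le_max_right _ _
  have h2nle : ‖(T ^ (2 * n)) x‖ ≤ max ‖(T ^ (2 * n)) x‖ ‖x‖ := le_max_left _ _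
  have ha0 : (0:ℝ) ≤ ‖(T ^ n) x‖ := norm_nonneg _
  have hb0 : (0:ℝ) ≤ max ‖(T ^ (2 * n)) x‖ ‖x‖ := le_trans (norm_nonneg _) hxle
  have h6 : 6 * C * ‖(T ^ n) x‖ ≤ (n:ℝ) * ‖(T ^ n) x‖ :=
    mul_le_mul_of_nonneg_right hn6 ha0
  nlinarith [hest, h6, mul_le_mul_of_nonneg_left hxle (le_of_lt hC0),
    mul_le_mul_of_nonneg_left h2nle (le_of_lt hC0)]
end
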